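/- arXiv:2408.01040 — 3 statements merged into one kernel-verified Lean document; each statement's English description precedes it below -/
import Mathlib

section
/- Suppose a CutMix output on ℝ^{D_s} with D_s = N·P²·C is formed by assigning each of the N patches (each of size P²·C pixels) to exactly one of n clients' smashed data, client i' receiving N_{i'} = λ_{i'}·N patches. If two adjacent datasets differ only in the i'-th client's smashed data, each bounded coordinatewise in [0,Δ], then the squared Euclidean distance of the two CutMix outputs is at most λ_{i'}·Δ²·D_s. -/
open Finset

/-- CutMix sensitivity: with D_s = N·P²·C coordinates, each of the N patches (of
P²·C pixels) assigned to one of n clients, client i' receiving N_{i'} patches so that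
λ_{i'} = N_{i'}/N, if two adjacent datasets differ only in client i''s smashed data
(bounded coordinatewise in [0,Δ]), then the squared distance of the CutMix outputs is
at most λ_{i'}·Δ²·D_s. -/
theorem cutmix_sensitivity (N P C n : ℕ) (hN : 0 < N) (Δ : ℝ) (hΔ : 0 ≤ Δ)
    (assign : Fin N → Fin n)
    (s s' : Fin n → EuclideanSpace ℝ (Fin N × Fin (P ^ 2 * C)))
    (i' : Fin n)
    (hdiff : ∀ i, i ≠ i' → s i = s' i)
    (hs : ∀ i j, 0 ≤ s i j ∧ s i j ≤ Δ)
    (hs' : ∀ i j, 0 ≤ s' i j ∧ s' i j ≤ Δ)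
    (lam : ℝ)
    (hlam : lam = ((univ.filter fun p : Fin N => assign p = i').card : ℝ) / N) :
    ‖(show EuclideanSpace ℝ (Fin N × Fin (P ^ 2 * C)) from WithLp.toLp 2 (fun j => s (assign j.1) j))
      - (show EuclideanSpace ℝ (Fin N × Fin (P ^ 2 * C)) from WithLp.toLp 2 (fun j => s' (assign j.1) j))‖ ^ 2
      ≤ lam * Δ ^ 2 * ((N * P ^ 2 * C : ℕ) : ℝ) := by
  set K := (univ.filter fun p : Fin N => assign p = i') with hK
  have hnorm : ‖(show EuclideanSpace ℝ (Fin N × Fin (P ^ 2 * C)) from WithLp.toLp 2 (fun j => s (assign j.1) j))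
      - (show EuclideanSpace ℝ (Fin N × Fin (P ^ 2 * C)) from WithLp.toLp 2 (fun j => s' (assign j.1) j))‖ ^ 2
      = ∑ j : Fin N × Fin (P ^ 2 * C), (s (assign j.1) j - s' (assign j.1) j) ^ 2 := by
    rw [EuclideanSpace.norm_eq, Real.sq_sqrt (by positivity)]
    congr 1
    ext j
    simp [sq_abs]
  rw [hnorm]
  have hbound : ∀ j : Fin N × Fin (P ^ 2 * C),
      (s (assign j.1) j - s' (assign j.1) j) ^ 2 ≤ if assign j.1 = i' then Δ ^ 2 else 0 := by
    intro j
    by_cases h : assign j.1 = i'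
    · rw [if_pos h]
      apply sq_le_sq'
      · have h1 := (hs (assign j.1) j).1
        have h2 := (hs' (assign j.1) j).2
        linarith
      · have h1 := (hs (assign j.1) j).2
        have h2 := (hs' (assign j.1) j).1
        linarith
    · rw [hdiff _ h]
      simp [h]
  calc ∑ j : Fin N × Fin (P ^ 2 * C), (s (assign j.1) j - s' (assign j.1) j) ^ 2
      ≤ ∑ j : Fin N × Fin (P ^ 2 * C), (if assign j.1 = i' then Δ ^ 2 else 0) :=
        Finset.sum_le_sum fun j _ => hbound j
    _ = (K.card : ℝ) * ((P ^ 2 * C : ℕ) : ℝ) * Δ ^ 2 := by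
        rw [Fintype.sum_prod_type]
        have hin : ∀ x : Fin N, (∑ _x1 : Fin (P ^ 2 * C), if assign x = i' then Δ ^ 2 else 0)
            = if assign x = i' then ((P ^ 2 * C : ℕ) : ℝ) * Δ ^ 2 else 0 := by
          intro x
          rw [Finset.sum_const, Finset.card_univ, Fintype.card_fin, nsmul_eq_mul]
          by_cases h : assign x = i' <;> simp [h]
        rw [Finset.sum_congr rfl fun x _ => hin x, ← Finset.sum_filter, ← hK,
          Finset.sum_const, nsmul_eq_mul]
        ring
    _ ≤ lam * Δ ^ 2 * ((N * P ^ 2 * C : ℕ) : ℝ) := by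
        apply le_of_eq
        have hN' : (N:ℝ) ≠ 0 := by positivity
        rw [hlam]
        push_cast
        field_simp
end

section
/- If a mechanism M is (ε, δ)-DP, then the subsampled mechanism M ∘ subsample, which first selects a random subset of sampling ratio γ ∈ (0,1] and then applies M, is (log(1 + γ(e^ε − 1)), γδ)-DP. -/
open MeasureTheory Finset

/-- The subsampled mechanism: each record of the dataset D is included independently
with probability γ, and M is applied to the resulting random subset. Its output
distribution is the corresponding mixture of the measures M S over subsets S ⊆ D. -/
noncomputable def subsampleMech {X : Type*} [DecidableEq X] {Ω : Type*} [MeasurableSpace Ω]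
    (γ : ℝ) (M : Finset X → Measure Ω) (D : Finset X) : Measure Ω :=
  ∑ S ∈ D.powerset,
    (ENNReal.ofReal (γ ^ S.card * (1 - γ) ^ (D.card - S.card))) • M S

lemma subsample_toReal {X : Type*} [DecidableEq X] {Ω : Type*} [MeasurableSpace Ω]
    (γ : ℝ) (hγ0 : 0 ≤ γ) (hγ1 : γ ≤ 1)
    (M : Finset X → Measure Ω) (hP : ∀ S, IsProbabilityMeasure (M S))
    (D : Finset X) (U : Set Ω) :
    ((subsampleMech γ M D) U).toReal
      = ∑ S ∈ D.powerset, γ ^ S.card * (1 - γ) ^ (D.card - S.card) * ((M S) U).toReal := by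
  have h1γ : (0:ℝ) ≤ 1 - γ := by linarith
  unfold subsampleMech
  rw [show ((∑ S ∈ D.powerset,
      (ENNReal.ofReal (γ ^ S.card * (1 - γ) ^ (D.card - S.card))) • M S) U)
      = ∑ S ∈ D.powerset,
          ENNReal.ofReal (γ ^ S.card * (1 - γ) ^ (D.card - S.card)) * (M S U) by
    simp [Measure.finset_sum_apply, Measure.smul_apply, smul_eq_mul]]
  rw [ENNReal.toReal_sum (fun S _ => by
    haveI := hP S
    exact ENNReal.mul_ne_top ENNReal.ofReal_ne_top (measure_ne_top _ _))]
  refine Finset.sum_congr rfl fun S _ => ?_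
  rw [ENNReal.toReal_mul, ENNReal.toReal_ofReal
    (mul_nonneg (pow_nonneg hγ0 _) (pow_nonneg h1γ _))]

lemma subsample_weight_sum {X : Type*} [DecidableEq X] (γ : ℝ) (D : Finset X) :
    ∑ S ∈ D.powerset, γ ^ S.card * (1 - γ) ^ (D.card - S.card) = 1 := by
  induction D using Finset.induction_on with
  | empty => simp
  | insert _ _ ha ih =>
    rename_i a s
    rw [Finset.sum_powerset_insert ha]
    have h1 : ∀ t ∈ s.powerset, γ ^ t.card * (1 - γ) ^ ((insert a s).card - t.card)
        = (1 - γ) * (γ ^ t.card * (1 - γ) ^ (s.card - t.card)) := by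
      intro t ht
      rw [Finset.card_insert_of_notMem ha,
        Nat.succ_sub (Finset.card_le_card (Finset.mem_powerset.mp ht)), pow_succ]
      ring
    have h2 : ∀ t ∈ s.powerset, γ ^ (insert a t).card * (1 - γ) ^ ((insert a s).card - (insert a t).card)
        = γ * (γ ^ t.card * (1 - γ) ^ (s.card - t.card)) := by
      intro t ht
      have hat : a ∉ t := fun h => ha (Finset.mem_powerset.mp ht h)
      rw [Finset.card_insert_of_notMem ha, Finset.card_insert_of_notMem hat,
        Nat.succ_sub_succ, pow_succ]
      ring
    rw [Finset.sum_congr rfl h1, Finset.sum_congr rfl h2, ← Finset.mul_sum, ← Finset.mul_sum, ih]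
    ring

/-- Privacy amplification by subsampling: if M is (ε, δ)-DP (for add/remove-one
adjacency), then the subsampled mechanism with sampling ratio γ is
(log(1 + γ(e^ε − 1)), γδ)-DP. -/
theorem subsampled_mechanism_dp {X : Type*} [DecidableEq X] {Ω : Type*} [MeasurableSpace Ω]
    (γ ε δ : ℝ) (hγ0 : 0 < γ) (hγ1 : γ ≤ 1) (hε : 0 ≤ ε) (hδ : 0 ≤ δ)
    (M : Finset X → Measure Ω) (hP : ∀ S, IsProbabilityMeasure (M S))
    (hDP : ∀ (S : Finset X) (x : X), x ∉ S → ∀ U : Set Ω, MeasurableSet U →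
      ((M (insert x S)) U).toReal ≤ Real.exp ε * ((M S) U).toReal + δ ∧
      ((M S) U).toReal ≤ Real.exp ε * ((M (insert x S)) U).toReal + δ) :
    ∀ (D : Finset X) (x : X), x ∉ D → ∀ U : Set Ω, MeasurableSet U →
      ((subsampleMech γ M (insert x D)) U).toReal
          ≤ Real.exp (Real.log (1 + γ * (Real.exp ε - 1)))
              * ((subsampleMech γ M D) U).toReal + γ * δ ∧
      ((subsampleMech γ M D) U).toReal
          ≤ Real.exp (Real.log (1 + γ * (Real.exp ε - 1)))
              * ((subsampleMech γ M (insert x D)) U).toReal + γ * δ := by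
  intro D x hx U hU
  set E := Real.exp ε with hE
  have hE1 : (1:ℝ) ≤ E := by
    rw [hE]; calc (1:ℝ) = Real.exp 0 := (Real.exp_zero).symm
    _ ≤ Real.exp ε := Real.exp_le_exp.mpr hε
  have h1γ : (0:ℝ) ≤ 1 - γ := by linarith
  set c := 1 + γ * (E - 1) with hc
  have hc1 : (1:ℝ) ≤ c := by
    have : 0 ≤ γ * (E - 1) := mul_nonneg hγ0.le (by linarith)
    simp [hc]; linarith
  have hcpos : (0:ℝ) < c := by linarith
  have hexp : Real.exp (Real.log (1 + γ * (E - 1))) = c := by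
    rw [Real.exp_log hcpos]
  -- abbreviations
  set w : Finset X → ℝ := fun S => γ ^ S.card * (1 - γ) ^ (D.card - S.card) with hw
  have hwnn : ∀ S, 0 ≤ w S := fun S =>
    mul_nonneg (pow_nonneg hγ0.le _) (pow_nonneg h1γ _)
  set a : Finset X → ℝ := fun S => ((M S) U).toReal with ha
  set b : Finset X → ℝ := fun S => ((M (insert x S)) U).toReal with hb
  have hann : ∀ S, 0 ≤ a S := fun S => ENNReal.toReal_nonneg
  have hbnn : ∀ S, 0 ≤ b S := fun S => ENNReal.toReal_nonneg
  have hPD : ((subsampleMech γ M D) U).toReal = ∑ S ∈ D.powerset, w S * a S :=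
    subsample_toReal γ hγ0.le hγ1 M hP D U
  have hPD' : ((subsampleMech γ M (insert x D)) U).toReal
      = ∑ S ∈ D.powerset, w S * ((1 - γ) * a S + γ * b S) := by
    rw [subsample_toReal γ hγ0.le hγ1 M hP (insert x D) U,
      Finset.sum_powerset_insert hx]
    have h1 : ∀ t ∈ D.powerset,
        γ ^ t.card * (1 - γ) ^ ((insert x D).card - t.card) * ((M t) U).toReal
        = w t * ((1 - γ) * a t) := by
      intro t ht
      rw [Finset.card_insert_of_notMem hx,
        Nat.succ_sub (Finset.card_le_card (Finset.mem_powerset.mp ht)), pow_succ]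
      simp only [hw, ha]; ring
    have h2 : ∀ t ∈ D.powerset,
        γ ^ (insert x t).card * (1 - γ) ^ ((insert x D).card - (insert x t).card)
          * ((M (insert x t)) U).toReal
        = w t * (γ * b t) := by
      intro t ht
      have hxt : x ∉ t := fun h => hx (Finset.mem_powerset.mp ht h)
      rw [Finset.card_insert_of_notMem hx, Finset.card_insert_of_notMem hxt,
        Nat.succ_sub_succ, pow_succ]
      simp only [hw, hb]; ring
    rw [Finset.sum_congr rfl h1, Finset.sum_congr rfl h2, ← Finset.sum_add_distrib]
    exact Finset.sum_congr rfl fun t _ => by ring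
  have hwsum : ∑ S ∈ D.powerset, w S = 1 := subsample_weight_sum γ D
  -- per-term DP facts
  have hDPm : ∀ S ∈ D.powerset, b S ≤ E * a S + δ ∧ a S ≤ E * b S + δ := by
    intro S hS
    have hxS : x ∉ S := fun h => hx (Finset.mem_powerset.mp hS h)
    exact hDP S x hxS U hU
  rw [hexp, hPD, hPD']
  constructor
  · -- forward direction
    have key : ∀ S ∈ D.powerset,
        w S * ((1 - γ) * a S + γ * b S) ≤ w S * (c * a S + γ * δ) := by
      intro S hS
      refine mul_le_mul_of_nonneg_left ?_ (hwnn S)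
      have hab := (hDPm S hS).1
      have := mul_le_mul_of_nonneg_left hab hγ0.le
      simp only [hc]; nlinarith
    calc ∑ S ∈ D.powerset, w S * ((1 - γ) * a S + γ * b S)
        ≤ ∑ S ∈ D.powerset, w S * (c * a S + γ * δ) := Finset.sum_le_sum key
      _ = c * ∑ S ∈ D.powerset, w S * a S + γ * δ * ∑ S ∈ D.powerset, w S := by
          rw [Finset.mul_sum, Finset.mul_sum, ← Finset.sum_add_distrib]
          exact Finset.sum_congr rfl fun S _ => by ring
      _ = c * ∑ S ∈ D.powerset, w S * a S + γ * δ := by rw [hwsum]; ring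
  · -- reverse direction
    have key : ∀ S ∈ D.powerset,
        w S * a S ≤ w S * (c * ((1 - γ) * a S + γ * b S) + γ * δ) := by
      intro S hS
      refine mul_le_mul_of_nonneg_left ?_ (hwnn S)
      have hab := (hDPm S hS).2
      have hEpos : (0:ℝ) < E := by linarith
      have h1 : 0 ≤ γ * (1 - γ) * (E - 1) ^ 2 * a S :=
        mul_nonneg (mul_nonneg (mul_nonneg hγ0.le h1γ) (sq_nonneg _)) (hann S)
      have h2 : 0 ≤ γ * δ * (1 - γ) * (E - 1) :=
        mul_nonneg (mul_nonneg (mul_nonneg hγ0.le hδ) h1γ) (by linarith)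
      have h3 : 0 ≤ c * γ * (E * b S + δ - a S) :=
        mul_nonneg (mul_nonneg hcpos.le hγ0.le) (by linarith)
      simp only [hc] at h1 h2 h3 ⊢
      nlinarith [h1, h2, h3, hEpos]
    calc ∑ S ∈ D.powerset, w S * a S
        ≤ ∑ S ∈ D.powerset, w S * (c * ((1 - γ) * a S + γ * b S) + γ * δ) :=
          Finset.sum_le_sum key
      _ = c * ∑ S ∈ D.powerset, w S * ((1 - γ) * a S + γ * b S)
            + γ * δ * ∑ S ∈ D.powerset, w S := by
          rw [Finset.mul_sum, Finset.mul_sum, ← Finset.sum_add_distrib]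
          exact Finset.sum_congr rfl fun S _ => by ring
      _ = c * ∑ S ∈ D.powerset, w S * ((1 - γ) * a S + γ * b S) + γ * δ := by
          rw [hwsum]; ring
end

section
/- The Gaussian mechanism M(D) = f(D) + N(0, σ²I_d), where f has ℓ₂-sensitivity at most Δ₂ (i.e., ‖f(D)−f(D')‖ ≤ Δ₂ for adjacent D, D'), satisfies (α, αΔ₂²/(2σ²))-RDP for every α > 1. -/
open MeasureTheory ProbabilityTheory NNReal

/-- The Rényi divergence of order α between two measures,
D_α(P‖Q) = (1/(α−1))·log ∫ (dP/dQ)^α dQ. -/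
noncomputable def renyiDiv {Ω : Type*} [MeasurableSpace Ω] (α : ℝ) (P Q : Measure Ω) : ℝ :=
  (1 / (α - 1)) * Real.log (∫ x, (P.rnDeriv Q x).toReal ^ α ∂Q)

lemma scalar_identity (a b : ℝ) (v : ℝ≥0) (hv : v ≠ 0) (α t : ℝ) :
    gaussianPDFReal b v t * (gaussianPDFReal a v t / gaussianPDFReal b v t) ^ α
      = Real.exp (α * (α - 1) * (a - b) ^ 2 / (2 * v)) *
        gaussianPDFReal (α * a + (1 - α) * b) v t := by
  have hvpos : (0 : ℝ) < (v : ℝ) := by positivity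
  have hC : (0 : ℝ) < (Real.sqrt (2 * Real.pi * v))⁻¹ := by positivity
  have hratio : gaussianPDFReal a v t / gaussianPDFReal b v t
      = Real.exp (-(t - a) ^ 2 / (2 * v) - -(t - b) ^ 2 / (2 * v)) := by
    rw [Real.exp_sub, gaussianPDFReal, gaussianPDFReal]
    rw [mul_div_mul_left _ _ (ne_of_gt hC)]
  have key : -(t - b) ^ 2 / (2 * (v:ℝ)) + (-(t - a) ^ 2 / (2 * v) - -(t - b) ^ 2 / (2 * v)) * α
      = α * (α - 1) * (a - b) ^ 2 / (2 * v) + -(t - (α * a + (1 - α) * b)) ^ 2 / (2 * v) := by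
    field_simp
    ring
  rw [hratio, ← Real.exp_mul, gaussianPDFReal, gaussianPDFReal, mul_left_comm, mul_assoc,
    ← Real.exp_add, key]
  rw [Real.exp_add]

lemma gaussian_withDensity (a b : ℝ) (v : ℝ≥0) (hv : v ≠ 0) :
    gaussianReal a v = (gaussianReal b v).withDensity
      (fun t => ENNReal.ofReal (gaussianPDFReal a v t / gaussianPDFReal b v t)) := by
  have hm : Measurable (fun t => ENNReal.ofReal (gaussianPDFReal a v t / gaussianPDFReal b v t)) :=
    (((measurable_gaussianPDFReal a v).div (measurable_gaussianPDFReal b v)).ennreal_ofReal)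
  rw [gaussianReal_of_var_ne_zero a hv, gaussianReal_of_var_ne_zero b hv,
    ← withDensity_mul _ (measurable_gaussianPDF b v) hm]
  congr 1
  funext t
  have hb : 0 < gaussianPDFReal b v t := gaussianPDFReal_pos b v t hv
  symm
  rw [Pi.mul_apply, gaussianPDF, gaussianPDF, ← ENNReal.ofReal_mul hb.le,
    mul_div_cancel₀ _ hb.ne']

lemma gaussian_lintegral_pow (a b : ℝ) (v : ℝ≥0) (hv : v ≠ 0) (α : ℝ) :
    ∫⁻ t, ENNReal.ofReal ((gaussianPDFReal a v t / gaussianPDFReal b v t) ^ α) ∂(gaussianReal b v)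
      = ENNReal.ofReal (Real.exp (α * (α - 1) * (a - b) ^ 2 / (2 * v))) := by
  have hm : Measurable (fun t => ENNReal.ofReal ((gaussianPDFReal a v t / gaussianPDFReal b v t) ^ α)) := by
    have h1 := measurable_gaussianPDFReal a v
    have h2 := measurable_gaussianPDFReal b v
    fun_prop
  rw [gaussianReal_of_var_ne_zero b hv,
    lintegral_withDensity_eq_lintegral_mul _ (measurable_gaussianPDF b v) hm]
  have : ∀ t, (gaussianPDF b v * fun t => ENNReal.ofReal ((gaussianPDFReal a v t / gaussianPDFReal b v t) ^ α)) t
      = ENNReal.ofReal (Real.exp (α * (α - 1) * (a - b) ^ 2 / (2 * v))) *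
        gaussianPDF (α * a + (1 - α) * b) v t := by
    intro t
    rw [Pi.mul_apply, gaussianPDF, ← ENNReal.ofReal_mul (gaussianPDFReal_nonneg b v t),
      scalar_identity a b v hv α t, gaussianPDF,
      ENNReal.ofReal_mul (Real.exp_nonneg _)]
  simp_rw [this]
  rw [lintegral_const_mul _ (measurable_gaussianPDF _ v), lintegral_gaussianPDF_eq_one _ hv, mul_one]

lemma lintegral_pi_prod : ∀ {n : ℕ} (μ : Fin n → Measure ℝ), (∀ i, SigmaFinite (μ i)) →
    ∀ (f : Fin n → ℝ → ENNReal), (∀ i, Measurable (f i)) →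
    ∫⁻ x, ∏ i, f i (x i) ∂Measure.pi μ = ∏ i, ∫⁻ t, f i t ∂μ i := by
  intro n
  induction n with
  | zero =>
    intro μ _ f hf
    simp [Measure.pi_of_empty]
  | succ n ih =>
    intro μ hsf f hf
    have := hsf
    have hmp := (measurePreserving_piFinSuccAbove μ 0).symm
    have hF : Measurable fun x : Fin (n+1) → ℝ => ∏ i, f i (x i) :=
      Finset.measurable_prod _ fun i _ => (hf i).comp (measurable_pi_apply i)
    rw [← hmp.map_eq, lintegral_map hF (MeasurableEquiv.piFinSuccAbove (fun _ => ℝ) 0).symm.measurable]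
    simp_rw [MeasurableEquiv.piFinSuccAbove_symm_apply, Fin.insertNthEquiv,
      Equiv.coe_fn_mk, Fin.insertNth_zero, Fin.prod_univ_succ, Fin.zero_succAbove, cast_eq,
      Fin.cons_zero, Fin.cons_succ]
    rw [lintegral_prod_mul (f := f 0) (g := fun b : Fin n → ℝ => ∏ j, f j.succ (b j))
      (hf 0).aemeasurable
      (Finset.measurable_prod _ fun j _ => (hf j.succ).comp (measurable_pi_apply j)).aemeasurable]
    rw [ih (fun j => μ j.succ) (fun j => hsf _) (fun j => f j.succ) (fun j => hf _)]

lemma pi_gaussian_withDensity {d : ℕ} (a b : Fin d → ℝ) (v : ℝ≥0) (hv : v ≠ 0) :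
    Measure.pi (fun i => gaussianReal (a i) v)
      = (Measure.pi fun i => gaussianReal (b i) v).withDensity
        (fun z => ∏ i, ENNReal.ofReal (gaussianPDFReal (a i) v (z i) / gaussianPDFReal (b i) v (z i))) := by
  refine Measure.pi_eq (μ := fun i => gaussianReal (a i) v) fun s hs => ?_
  rw [withDensity_apply _ (MeasurableSet.univ_pi hs), ← lintegral_indicator (MeasurableSet.univ_pi hs) _]
  have heq : (Set.univ.pi s).indicator
      (fun z => ∏ i, ENNReal.ofReal (gaussianPDFReal (a i) v (z i) / gaussianPDFReal (b i) v (z i)))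
      = fun z => ∏ i, (s i).indicator
        (fun t => ENNReal.ofReal (gaussianPDFReal (a i) v t / gaussianPDFReal (b i) v t)) (z i) := by
    funext z
    by_cases hz : z ∈ Set.univ.pi s
    · rw [Set.indicator_of_mem hz]
      exact Finset.prod_congr rfl fun i _ =>
        (Set.indicator_of_mem (hz i (Set.mem_univ i))
          fun t => ENNReal.ofReal (gaussianPDFReal (a i) v t / gaussianPDFReal (b i) v t)).symm
    · rw [Set.indicator_of_notMem hz]
      rw [Set.mem_univ_pi] at hz
      push_neg at hz
      obtain ⟨i, his⟩ := hz
      exact (Finset.prod_eq_zero (Finset.mem_univ i) (Set.indicator_of_notMem his _)).symm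
  rw [heq, lintegral_pi_prod (fun i => gaussianReal (b i) v) (fun i => inferInstance)
    (fun i => (s i).indicator
      (fun t => ENNReal.ofReal (gaussianPDFReal (a i) v t / gaussianPDFReal (b i) v t)))
    (fun i => Measurable.indicator
      (((measurable_gaussianPDFReal (a i) v).div (measurable_gaussianPDFReal (b i) v)).ennreal_ofReal)
      (hs i))]
  refine Finset.prod_congr rfl fun i _ => ?_
  rw [lintegral_indicator (hs i) _, ← withDensity_apply _ (hs i), ← gaussian_withDensity _ _ _ hv]

/-- The Gaussian mechanism M(D) = f(D) + N(0, σ²I_d) with ℓ₂-sensitivity at most Δ₂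
satisfies (α, αΔ₂²/(2σ²))-RDP for every α > 1. -/
theorem gaussian_mechanism_rdp {D : Type*} (d : ℕ)
    (Adj : D → D → Prop) (f : D → (Fin d → ℝ)) (σ : ℝ≥0) (hσ : 0 < σ)
    (Δ₂ : ℝ) (hΔ₂ : 0 ≤ Δ₂)
    (hsens : ∀ x y, Adj x y → Real.sqrt (∑ i, (f x i - f y i) ^ 2) ≤ Δ₂)
    (α : ℝ) (hα : 1 < α) :
    ∀ x y, Adj x y →
      renyiDiv α
        (Measure.pi fun i => gaussianReal (f x i) (σ ^ 2))
        (Measure.pi fun i => gaussianReal (f y i) (σ ^ 2))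
      ≤ α * (Δ₂ ^ 2) / (2 * (σ : ℝ) ^ 2) := by
  intro x y hxy
  have hv : (σ ^ 2 : ℝ≥0) ≠ 0 := pow_ne_zero 2 hσ.ne'
  set v : ℝ≥0 := σ ^ 2 with hvdef
  set a : Fin d → ℝ := f x
  set b : Fin d → ℝ := f y
  set P := Measure.pi fun i => gaussianReal (a i) v
  set Q := Measure.pi fun i => gaussianReal (b i) v
  set r : Fin d → ℝ → ℝ := fun i t => gaussianPDFReal (a i) v t / gaussianPDFReal (b i) v t with hr
  have hr_nonneg : ∀ i t, 0 ≤ r i t := fun i t =>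
    div_nonneg (gaussianPDFReal_nonneg _ _ _) (gaussianPDFReal_nonneg _ _ _)
  have hrm : ∀ i, Measurable (r i) := fun i =>
    (measurable_gaussianPDFReal (a i) v).div (measurable_gaussianPDFReal (b i) v)
  set g : (Fin d → ℝ) → ENNReal := fun z => ∏ i, ENNReal.ofReal (r i (z i)) with hgdef
  have hg : Measurable g :=
    Finset.measurable_prod _ fun i _ => ((hrm i).comp (measurable_pi_apply i)).ennreal_ofReal
  have hPQ : P = Q.withDensity g := pi_gaussian_withDensity a b v hv
  have hrn : P.rnDeriv Q =ᵐ[Q] g := by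
    rw [hPQ]
    exact Measure.rnDeriv_withDensity Q hg
  -- value of the integral
  have hint : ∫ z, (P.rnDeriv Q z).toReal ^ α ∂Q
      = Real.exp (∑ i, α * (α - 1) * (a i - b i) ^ 2 / (2 * v)) := by
    have h1 : ∫ z, (P.rnDeriv Q z).toReal ^ α ∂Q = ∫ z, ∏ i, r i (z i) ^ α ∂Q := by
      refine integral_congr_ae ?_
      filter_upwards [hrn] with z hz
      rw [hz, hgdef]
      simp only
      rw [ENNReal.toReal_prod,
        Finset.prod_congr rfl fun i (_ : i ∈ Finset.univ) =>
          ENNReal.toReal_ofReal (hr_nonneg i (z i)),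
        ← Real.finset_prod_rpow _ _ (fun i _ => hr_nonneg i (z i)) α]
    have hmeas : Measurable fun z : Fin d → ℝ => ∏ i, r i (z i) ^ α := by
      refine Finset.measurable_prod _ fun i _ => ?_
      have := hrm i
      fun_prop
    have h2 : ∫ z, ∏ i, r i (z i) ^ α ∂Q
        = (∫⁻ z, ENNReal.ofReal (∏ i, r i (z i) ^ α) ∂Q).toReal := by
      refine integral_eq_lintegral_of_nonneg_ae (Filter.Eventually.of_forall fun z => ?_)
        hmeas.aestronglyMeasurable
      exact Finset.prod_nonneg fun i _ => Real.rpow_nonneg (hr_nonneg i (z i)) α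
    have h3 : ∫⁻ z, ENNReal.ofReal (∏ i, r i (z i) ^ α) ∂Q
        = ∏ i, ENNReal.ofReal (Real.exp (α * (α - 1) * (a i - b i) ^ 2 / (2 * v))) := by
      have : ∀ z : Fin d → ℝ, ENNReal.ofReal (∏ i, r i (z i) ^ α)
          = ∏ i, ENNReal.ofReal (r i (z i) ^ α) :=
        fun z => ENNReal.ofReal_prod_of_nonneg fun i _ => Real.rpow_nonneg (hr_nonneg i (z i)) α
      simp_rw [this]
      rw [lintegral_pi_prod (fun i => gaussianReal (b i) v) (fun i => inferInstance)
        (fun i t => ENNReal.ofReal (r i t ^ α))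
        (fun i => by have := hrm i; fun_prop)]
      exact Finset.prod_congr rfl fun i _ => gaussian_lintegral_pow (a i) (b i) v hv α
    rw [h1, h2, h3, ← ENNReal.ofReal_prod_of_nonneg (fun i _ => Real.exp_nonneg _),
      ← Real.exp_sum, ENNReal.toReal_ofReal (Real.exp_nonneg _)]
  rw [renyiDiv, hint, Real.log_exp]
  have hS : (0:ℝ) ≤ ∑ i, (a i - b i) ^ 2 := Finset.sum_nonneg fun i _ => sq_nonneg _
  have hSle : ∑ i, (a i - b i) ^ 2 ≤ Δ₂ ^ 2 := by
    have h := hsens x y hxy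
    calc ∑ i, (a i - b i) ^ 2 = Real.sqrt (∑ i, (a i - b i) ^ 2) ^ 2 := (Real.sq_sqrt hS).symm
    _ ≤ Δ₂ ^ 2 := pow_le_pow_left₀ (Real.sqrt_nonneg _) h 2
  have hsum : ∑ i, α * (α - 1) * (a i - b i) ^ 2 / (2 * (v:ℝ))
      = α * (α - 1) * (∑ i, (a i - b i) ^ 2) / (2 * (v:ℝ)) := by
    rw [← Finset.sum_div, ← Finset.mul_sum]
  rw [hsum]
  have hv' : ((v : ℝ)) = (σ:ℝ) ^ 2 := by rw [hvdef]; push_cast; ring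
  rw [hv']
  have hα1 : α - 1 ≠ 0 := sub_ne_zero.mpr hα.ne'
  have hσ2 : (0:ℝ) < 2 * (σ:ℝ) ^ 2 := by positivity
  have : (1 / (α - 1)) * (α * (α - 1) * (∑ i, (a i - b i) ^ 2) / (2 * (σ:ℝ) ^ 2))
      = α * (∑ i, (a i - b i) ^ 2) / (2 * (σ:ℝ) ^ 2) := by
    field_simp
  rw [this]
  have hα0 : (0:ℝ) ≤ α := le_of_lt (lt_trans one_pos hα)
  gcongr
end
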